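/- A twice continuously differentiable 2π-periodic function h : ℝ → ℝ satisfying h''(θ) + ρ² h(θ) ≥ 0 for all θ is ρ-trigonometrically convex: for all θ₁ ≤ θ ≤ θ₂ < θ₁ + π/ρ, h(θ) sin ρ(θ₂ − θ₁) ≤ h(θ₁) sin ρ(θ₂ − θ) + h(θ₂) sin ρ(θ − θ₁). -/

import Mathlib

/-- `ρ`-trigonometric convexity: the three-point inequality. -/
def TrigConvex (ρ : ℝ) (h : ℝ → ℝ) : Prop :=
  ∀ θ₁ θ θ₂ : ℝ, θ₁ ≤ θ → θ ≤ θ₂ → θ₂ < θ₁ + Real.pi / ρ →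
    h θ * Real.sin (ρ * (θ₂ - θ₁)) ≤
      h θ₁ * Real.sin (ρ * (θ₂ - θ)) + h θ₂ * Real.sin (ρ * (θ - θ₁))

/-!
Fix `θ₁ ≤ θ₂` with `θ₂ - θ₁ < π / ρ` and put
`F x = h θ₁ sin ρ(θ₂ - x) + h θ₂ sin ρ(x - θ₁) - h x sin ρ(θ₂ - θ₁)`.
Then `F θ₁ = F θ₂ = 0` and `F'' + ρ² F = -(h'' + ρ² h) sin ρ(θ₂ - θ₁) ≤ 0`, so it suffices
to prove a maximum principle for `d²/dx² + ρ²` on intervals shorter than `π / ρ`. On such an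
interval there is a positive solution `S x = sin ρ(x - c)` of `S'' + ρ² S = 0`, and the
Wronskian `W = S F' - F S'` satisfies `W' = S (F'' + ρ² F) ≤ 0`. Since `(F / S)' = W / S²` has
the sign of the antitone function `W`, the quotient `F / S` first increases and then
decreases, so it is bounded below by its nonnegative values at the endpoints.
-/

open Real Set

lemma min_le_of_hasDerivAt_div_antitoneOn {G W k : ℝ → ℝ} {a b : ℝ}
    (hG : ContinuousOn G (Icc a b)) (hderiv : ∀ x ∈ Ioo a b, HasDerivAt G (W x / k x) x)
    (hk : ∀ x ∈ Ioo a b, 0 < k x) (hW : AntitoneOn W (Ioo a b)) {x : ℝ} (hx : x ∈ Icc a b) :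
    min (G a) (G b) ≤ G x := by
  by_contra! hlt
  have hax : a < x := hx.1.lt_of_ne (by rintro rfl; simp at hlt)
  have hxb : x < b := hx.2.lt_of_ne (by rintro rfl; simp at hlt)
  obtain ⟨c, hc, hc_slope⟩ := exists_hasDerivAt_eq_slope G (fun y => W y / k y) hax
    (hG.mono (Icc_subset_Icc le_rfl hxb.le)) fun y hy => hderiv y ⟨hy.1, hy.2.trans hxb⟩
  obtain ⟨d, hd, hd_slope⟩ := exists_hasDerivAt_eq_slope G (fun y => W y / k y) hxb
    (hG.mono (Icc_subset_Icc hax.le le_rfl)) fun y hy => hderiv y ⟨hax.trans hy.1, hy.2⟩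
  have hc_mem : c ∈ Ioo a b := ⟨hc.1, hc.2.trans hxb⟩
  have hd_mem : d ∈ Ioo a b := ⟨hax.trans hd.1, hd.2⟩
  have hslope_c : W c / k c < 0 := by
    rw [hc_slope]
    exact div_neg_of_neg_of_pos (by linarith [min_le_left (G a) (G b)]) (sub_pos.2 hax)
  have hslope_d : 0 < W d / k d := by
    rw [hd_slope]
    exact div_pos (by linarith [min_le_right (G a) (G b)]) (sub_pos.2 hxb)
  have hWc : W c < 0 := by simpa using (div_lt_iff₀ (hk c hc_mem)).1 hslope_c
  have hWd : 0 < W d := (div_pos_iff_of_pos_right (hk d hd_mem)).1 hslope_d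
  linarith [hW hc_mem hd_mem (hc.2.trans hd.1).le]

lemma hasDerivAt_sin_mul_sub (ρ c x : ℝ) :
    HasDerivAt (fun y => sin (ρ * (y - c))) (ρ * cos (ρ * (x - c))) x := by
  simpa [mul_comm] using (((hasDerivAt_id x).sub_const c).const_mul ρ).sin

lemma hasDerivAt_cos_mul_sub (ρ c x : ℝ) :
    HasDerivAt (fun y => cos (ρ * (y - c))) (-(ρ * sin (ρ * (x - c)))) x := by
  simpa [mul_comm] using (((hasDerivAt_id x).sub_const c).const_mul ρ).cos

lemma sin_mul_sub_pos {ρ c x : ℝ} (hρ : 0 < ρ) (hcx : c < x) (hxc : x - c < π / ρ) :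
    0 < sin (ρ * (x - c)) :=
  sin_pos_of_pos_of_lt_pi (mul_pos hρ (sub_pos.2 hcx)) (by rwa [← lt_div_iff₀' hρ])

lemma nonneg_of_deriv_deriv_add_sq_mul_nonpos {ρ a b : ℝ} (hρ : 0 < ρ) (hab : b - a < π / ρ)
    {F F' F'' : ℝ → ℝ} (hF : ∀ x ∈ Icc a b, HasDerivAt F (F' x) x)
    (hF' : ∀ x ∈ Icc a b, HasDerivAt F' (F'' x) x)
    (hsuper : ∀ x ∈ Ioo a b, F'' x + ρ ^ 2 * F x ≤ 0) (ha : 0 ≤ F a) (hb : 0 ≤ F b)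
    {x : ℝ} (hx : x ∈ Icc a b) : 0 ≤ F x := by
  set c := a - (a + π / ρ - b) / 2 with hc
  set S := fun y => sin (ρ * (y - c))
  set S' := fun y => ρ * cos (ρ * (y - c))
  have hS_pos : ∀ y ∈ Icc a b, 0 < S y := fun y hy =>
    sin_mul_sub_pos hρ (by rw [hc]; linarith [hy.1]) (by rw [hc]; linarith [hy.2])
  have hS : ∀ y, HasDerivAt S (S' y) y := hasDerivAt_sin_mul_sub ρ c
  have hS' : ∀ y, HasDerivAt S' (-(ρ ^ 2 * S y)) y := fun y =>
    ((hasDerivAt_cos_mul_sub ρ c y).const_mul ρ).congr_deriv (by ring)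
  set W := fun y => S y * F' y - F y * S' y
  have hW : ∀ y ∈ Icc a b, HasDerivAt W (S y * (F'' y + ρ ^ 2 * F y)) y := fun y hy =>
    (((hS y).mul (hF' y hy)).sub ((hF y hy).mul (hS' y))).congr_deriv (by ring)
  have hW_anti : AntitoneOn W (Icc a b) := by
    refine antitoneOn_of_deriv_nonpos (convex_Icc a b)
      (fun y hy => (hW y hy).continuousAt.continuousWithinAt)
      (fun y hy => (hW y (interior_subset hy)).differentiableAt.differentiableWithinAt)
      fun y hy => ?_
    rw [interior_Icc] at hy
    rw [(hW y (Ioo_subset_Icc_self hy)).deriv]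
    exact mul_nonpos_of_nonneg_of_nonpos (hS_pos y (Ioo_subset_Icc_self hy)).le (hsuper y hy)
  have hquot := min_le_of_hasDerivAt_div_antitoneOn
    (G := fun y => F y / S y) (k := fun y => S y ^ 2)
    (fun y hy => ((hF y hy).continuousAt.div (hS y).continuousAt
      (hS_pos y hy).ne').continuousWithinAt)
    (fun y hy => (((hF y (Ioo_subset_Icc_self hy)).div (hS y)
      (hS_pos y (Ioo_subset_Icc_self hy)).ne')).congr_deriv (by ring))
    (fun y hy => pow_pos (hS_pos y (Ioo_subset_Icc_self hy)) 2)
    (hW_anti.mono Ioo_subset_Icc_self) hx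
  have hab' : a ≤ b := hx.1.trans hx.2
  have hmin : 0 ≤ min (F a / S a) (F b / S b) :=
    le_min (div_nonneg ha (hS_pos a (left_mem_Icc.2 hab')).le)
      (div_nonneg hb (hS_pos b (right_mem_Icc.2 hab')).le)
  simpa using (le_div_iff₀ (hS_pos x hx)).1 (hmin.trans hquot)

theorem stmt7_general (ρ : ℝ) (hρ : 0 < ρ) (h : ℝ → ℝ)
    (hC2 : ContDiff ℝ 2 h)
    (hineq : ∀ θ : ℝ, 0 ≤ deriv (deriv h) θ + ρ ^ 2 * h θ) :
    TrigConvex ρ h := by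
  intro θ₁ θ θ₂ hθ₁ hθ₂ hlt
  set A := sin (ρ * (θ₂ - θ₁))
  have hA : 0 ≤ A := sin_nonneg_of_nonneg_of_le_pi (mul_nonneg hρ.le (by linarith))
    (by rw [← le_div_iff₀' hρ]; linarith)
  have hsin_swap : ∀ x y, sin (ρ * (x - y)) = -sin (ρ * (y - x)) := fun x y => by
    rw [← sin_neg]; ring_nf
  have hd : ∀ x, HasDerivAt h (deriv h x) x := fun x =>
    (hC2.differentiable two_ne_zero x).hasDerivAt
  have hd2 : ∀ x, HasDerivAt (deriv h) (deriv (deriv h) x) x := fun x =>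
    (hC2.differentiable_deriv_two x).hasDerivAt
  have key := nonneg_of_deriv_deriv_add_sq_mul_nonpos hρ (by linarith) (a := θ₁)
    (F := fun x => h θ₂ * sin (ρ * (x - θ₁)) - h θ₁ * sin (ρ * (x - θ₂)) - A * h x)
    (F' := fun x => h θ₂ * (ρ * cos (ρ * (x - θ₁))) - h θ₁ * (ρ * cos (ρ * (x - θ₂)))
      - A * deriv h x)
    (F'' := fun x => -(ρ ^ 2 * h θ₂ * sin (ρ * (x - θ₁))) + ρ ^ 2 * h θ₁ * sin (ρ * (x - θ₂))
      - A * deriv (deriv h) x)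
    (fun x _ => ((((hasDerivAt_sin_mul_sub ρ θ₁ x).const_mul _).sub
      ((hasDerivAt_sin_mul_sub ρ θ₂ x).const_mul _)).sub ((hd x).const_mul A)))
    (fun x _ => ((((hasDerivAt_cos_mul_sub ρ θ₁ x).const_mul _).const_mul _).sub
      (((hasDerivAt_cos_mul_sub ρ θ₂ x).const_mul _).const_mul _)).sub
      ((hd2 x).const_mul A) |>.congr_deriv (by ring))
    (fun x _ => by linarith [mul_nonneg hA (hineq x)])
    (by rw [hsin_swap θ₁ θ₂]; simp [A, mul_comm]) (by simp [A, mul_comm]) ⟨hθ₁, hθ₂⟩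
  rw [hsin_swap θ θ₂] at key
  linarith

/-- a `C²` `2π`-periodic function with `h'' + ρ²h ≥ 0` is
`ρ`-trigonometrically convex. -/
theorem stmt7 (ρ : ℝ) (hρ : 0 < ρ) (h : ℝ → ℝ)
    (hC2 : ContDiff ℝ 2 h) (hper : Function.Periodic h (2 * Real.pi))
    (hineq : ∀ θ : ℝ, 0 ≤ deriv (deriv h) θ + ρ ^ 2 * h θ) :
    TrigConvex ρ h :=
  stmt7_general ρ hρ h hC2 hineq
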